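/- arXiv:1507.02389 — 2 statements merged into one kernel-verified Lean document; each statement's English description precedes it below -/
import Mathlib

section
/- Let d ≥ 1, R > 0, δ > 0, let μ be a probability measure on ℝ^d supported in the closed Euclidean ball B(0,R), and let p be the density of μ⋆γ_δ, i.e., p(z) = ∫ (2πδ²)^{−d/2} exp(−|z−x|²/(2δ²)) dμ(x). Then −log p is C² and Hess(−log p)(z) ≥ (1/δ² − R²/δ⁴) I_d for all z ∈ ℝ^d. -/
open MeasureTheory Metric Real
open scoped RealInnerProductSpace

/-!
Write `p = c • G` with `G z = ∫ φ (z - x) dμ(x)` and `φ u = exp (-‖u‖² / (2δ²))`. Because `μ` is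
compactly supported, `G` can be differentiated twice under the integral sign, and
`Hess (-log G) z (v, v) = ‖v‖² / δ² - Var_z ⟪x, v⟫ / δ⁴`, where `Var_z` is the variance under the
probability measure proportional to `φ (z - x) dμ(x)`. On the support `|⟪x, v⟫| ≤ R ‖v‖`, so this
variance is at most `R² ‖v‖²`.
-/

noncomputable def measureConv {E G : Type*} [NormedAddCommGroup E] [MeasurableSpace E]
    [NormedAddCommGroup G] [NormedSpace ℝ G] (μ : Measure E) (f : E → G) (y : E) : G :=
  ∫ x, f (y - x) ∂μ

section MeasureConv

variable {E G : Type*} [NormedAddCommGroup E] [NormedSpace ℝ E] [FiniteDimensional ℝ E]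
  [MeasurableSpace E] [BorelSpace E] [NormedAddCommGroup G] {μ : Measure E} [IsFiniteMeasure μ]
  {K : Set E} (hK : IsCompact K) (hμK : ∀ᵐ x ∂μ, x ∈ K)
include hK hμK

theorem integrable_comp_sub_of_ae_mem_isCompact {f : E → G} (hf : Continuous f) (y : E) :
    Integrable (fun x => f (y - x)) μ := by
  rw [← Measure.restrict_eq_self_of_ae_mem hμK]
  exact (hf.comp (continuous_const.sub continuous_id)).continuousOn.integrableOn_compact hK

variable [NormedSpace ℝ G]

theorem measureConv_clm_apply {H : Type*} [NormedAddCommGroup H] [NormedSpace ℝ H]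
    {F : E → H →L[ℝ] G} (hF : Continuous F) (z : E) (v : H) :
    measureConv μ F z v = measureConv μ (fun u => F u v) z :=
  ContinuousLinearMap.integral_apply (integrable_comp_sub_of_ae_mem_isCompact hK hμK hF z) v

theorem continuous_measureConv {f : E → G} (hf : Continuous f) :
    Continuous (measureConv μ f) := by
  have h : measureConv μ f = fun y => ∫ x in K, f (y - x) ∂μ := by
    rw [Measure.restrict_eq_self_of_ae_mem hμK]; rfl
  rw [h]
  exact continuous_parametric_integral_of_continuous (by fun_prop) hK

theorem hasFDerivAt_measureConv {f : E → G} (hf : ContDiff ℝ 1 f) (z : E) :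
    HasFDerivAt (measureConv μ f) (measureConv μ (fderiv ℝ f) z) z := by
  have hf' : Continuous (fderiv ℝ f) := hf.continuous_fderiv one_ne_zero
  obtain ⟨C, hC⟩ := ((isCompact_closedBall z 1).prod hK).exists_bound_of_continuousOn
    (f := fun q : E × E => fderiv ℝ f (q.1 - q.2)) (by fun_prop)
  refine hasFDerivAt_integral_of_dominated_of_fderiv_le (closedBall_mem_nhds z one_pos)
    (.of_forall fun y =>
      (integrable_comp_sub_of_ae_mem_isCompact hK hμK hf.continuous y).aestronglyMeasurable)
    (integrable_comp_sub_of_ae_mem_isCompact hK hμK hf.continuous z)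
    (integrable_comp_sub_of_ae_mem_isCompact hK hμK hf' z).aestronglyMeasurable
    (hμK.mono fun x hx y hy => hC (y, x) ⟨hy, hx⟩) (integrable_const C)
    (ae_of_all _ fun x y _ => ?_)
  exact (hasFDerivAt_comp_sub x).mpr (hf.differentiable one_ne_zero (y - x)).hasFDerivAt

theorem fderiv_measureConv {f : E → G} (hf : ContDiff ℝ 1 f) :
    fderiv ℝ (measureConv μ f) = measureConv μ (fderiv ℝ f) :=
  funext fun z => (hasFDerivAt_measureConv hK hμK hf z).fderiv

theorem contDiff_measureConv {n : ℕ} {f : E → G} (hf : ContDiff ℝ n f) :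
    ContDiff ℝ n (measureConv μ f) := by
  induction n generalizing f with
  | zero => exact contDiff_zero.mpr (continuous_measureConv hK hμK (contDiff_zero.mp hf))
  | succ n ih =>
    have hf1 : ContDiff ℝ 1 f := hf.of_le (by exact_mod_cast Nat.le_add_left 1 n)
    rw [Nat.cast_succ, contDiff_succ_iff_fderiv_apply] at hf ⊢
    refine ⟨fun z => (hasFDerivAt_measureConv hK hμK hf1 z).differentiableAt, by simp,
      fun v => ?_⟩
    have h : (fun z => fderiv ℝ (measureConv μ f) z v) = measureConv μ (fun u => fderiv ℝ f u v) :=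
      funext fun z => by
        rw [fderiv_measureConv hK hμK hf1,
          measureConv_clm_apply hK hμK (hf1.continuous_fderiv one_ne_zero)]
    rw [h]
    exact ih (hf.2.2 v)

end MeasureConv

/-- The left side is `(∫ w)²` times the variance of `a - X` under the normalised weight `w`;
the shift by `a` does not change it. -/
theorem weighted_variance_le {α : Type*} [MeasurableSpace α] {μ : Measure α} {w X : α → ℝ}
    {M : ℝ} (hw : Integrable w μ) (hw0 : ∀ᵐ x ∂μ, 0 ≤ w x) (hX : AEStronglyMeasurable X μ)
    (hXM : ∀ᵐ x ∂μ, |X x| ≤ M) (a : ℝ) :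
    (∫ x, w x * (a - X x) ^ 2 ∂μ) * (∫ x, w x ∂μ) - (∫ x, w x * (a - X x) ∂μ) ^ 2 ≤
      M ^ 2 * (∫ x, w x ∂μ) ^ 2 := by
  have hX2M : ∀ᵐ x ∂μ, X x ^ 2 ≤ M ^ 2 :=
    hXM.mono fun x hx => sq_le_sq' (abs_le.mp hx).1 (abs_le.mp hx).2
  have hwX : Integrable (fun x => w x * X x) μ := hw.mul_bdd hX (c := M) (by simpa using hXM)
  have hwX2 : Integrable (fun x => w x * X x ^ 2) μ :=
    hw.mul_bdd (hX.pow 2) (c := M ^ 2) (hX2M.mono fun x hx => by simpa using hx)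
  have hfirst : ∫ x, w x * (a - X x) ∂μ = (∫ x, w x ∂μ) * a - ∫ x, w x * X x ∂μ := by
    simp_rw [mul_sub]
    rw [integral_sub (hw.mul_const a) hwX, integral_mul_const]
  have hsecond : ∫ x, w x * (a - X x) ^ 2 ∂μ =
      a ^ 2 * (∫ x, w x ∂μ) - 2 * a * (∫ x, w x * X x ∂μ) + ∫ x, w x * X x ^ 2 ∂μ := by
    have h : (fun x => w x * (a - X x) ^ 2) =
        fun x => (a ^ 2 * w x - 2 * a * (w x * X x)) + w x * X x ^ 2 := by
      funext x; ring
    have hlin : Integrable (fun x => a ^ 2 * w x - 2 * a * (w x * X x)) μ :=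
      (hw.const_mul _).sub (hwX.const_mul _)
    rw [h, integral_add hlin hwX2,
      integral_sub (hw.const_mul _) (hwX.const_mul _), integral_const_mul, integral_const_mul]
  have hmass : 0 ≤ ∫ x, w x ∂μ := integral_nonneg_of_ae hw0
  have hbound : ∫ x, w x * X x ^ 2 ∂μ ≤ M ^ 2 * ∫ x, w x ∂μ := by
    rw [← integral_const_mul]
    refine integral_mono_ae hwX2 (hw.const_mul _) ?_
    filter_upwards [hw0, hX2M] with x hx0 hx
    nlinarith
  rw [hfirst, hsecond]
  nlinarith [mul_le_mul_of_nonneg_right hbound hmass, sq_nonneg (∫ x, w x * X x ∂μ)]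

theorem fderiv_fderiv_neg_log_apply {E : Type*} [NormedAddCommGroup E] [NormedSpace ℝ E]
    {g : E → ℝ} (hg : ContDiff ℝ 2 g) (hpos : ∀ z, 0 < g z) (z v : E) :
    fderiv ℝ (fderiv ℝ fun z => -log (g z)) z v v =
      -fderiv ℝ (fderiv ℝ g) z v v / g z + fderiv ℝ g z v ^ 2 / g z ^ 2 := by
  have hg1 : Differentiable ℝ g := hg.differentiable two_ne_zero
  have hg2 : Differentiable ℝ (fderiv ℝ g) :=
    (hg.fderiv_right (m := 1) le_rfl).differentiable one_ne_zero
  have hfd : fderiv ℝ (fun z => -log (g z)) = fun z => -(g z)⁻¹ • fderiv ℝ g z := by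
    funext w
    rw [neg_smul]
    exact (((hg1 w).hasFDerivAt.log (hpos w).ne').neg).fderiv
  have hinv := ((hasDerivAt_inv (hpos z).ne').comp_hasFDerivAt z (hg1 z).hasFDerivAt).neg
  have hH : HasFDerivAt (fun w => -(g w)⁻¹ • fderiv ℝ g w) _ z := hinv.smul (hg2 z).hasFDerivAt
  rw [hfd, hH.fderiv]
  simp only [Pi.neg_apply, Function.comp_apply, neg_smul, neg_neg, add_apply, neg_apply, smul_apply,
    ContinuousLinearMap.smulRight_apply, smul_eq_mul]
  field_simp


section GaussKernel

variable {E : Type*} [NormedAddCommGroup E] [InnerProductSpace ℝ E]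

noncomputable def gaussKernel (δ : ℝ) (u : E) : ℝ := exp (-‖u‖ ^ 2 / (2 * δ ^ 2))

theorem contDiff_gaussKernel (δ : ℝ) {n : WithTop ℕ∞} : ContDiff ℝ n (gaussKernel (E := E) δ) :=
  ((contDiff_norm_sq ℝ).neg.div_const _).exp

theorem hasFDerivAt_gaussKernel (δ : ℝ) (u : E) :
    HasFDerivAt (gaussKernel δ) ((-gaussKernel δ u / δ ^ 2) • innerSL ℝ u) u := by
  have harg : HasFDerivAt (fun w : E => -‖w‖ ^ 2 / (2 * δ ^ 2)) (-(δ ^ 2)⁻¹ • innerSL ℝ u) u := by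
    have hfun : (fun w : E => -‖w‖ ^ 2 / (2 * δ ^ 2)) =
        fun w => -(2 * δ ^ 2)⁻¹ * ‖id w‖ ^ 2 := by
      funext w
      simp only [id]
      ring
    rw [hfun]
    refine ((hasFDerivAt_id u).norm_sq.const_mul _).congr_fderiv ?_
    ext v
    simp only [mul_inv_rev, id_eq, ContinuousLinearMap.comp_id, neg_smul, neg_apply, smul_apply,
      coe_innerSL_apply, nsmul_eq_mul, Nat.cast_ofNat, smul_eq_mul, neg_inj]
    ring
  refine harg.exp.congr_fderiv ?_
  ext v
  simp only [neg_smul, smul_neg, neg_apply, smul_apply, coe_innerSL_apply, smul_eq_mul,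
    gaussKernel]
  ring

theorem fderiv_gaussKernel (δ : ℝ) :
    fderiv ℝ (gaussKernel (E := E) δ) = fun u => (-gaussKernel δ u / δ ^ 2) • innerSL ℝ u :=
  funext fun u => (hasFDerivAt_gaussKernel δ u).fderiv

theorem fderiv_gaussKernel_apply (δ : ℝ) (u v : E) :
    fderiv ℝ (gaussKernel δ) u v = -gaussKernel δ u * ⟪u, v⟫ / δ ^ 2 := by
  simp only [fderiv_gaussKernel, smul_apply, coe_innerSL_apply, smul_eq_mul, neg_mul]
  ring

theorem fderiv_fderiv_gaussKernel_apply (δ : ℝ) (u v : E) :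
    fderiv ℝ (fderiv ℝ (gaussKernel δ)) u v v =
      gaussKernel δ u * (⟪u, v⟫ ^ 2 / δ ^ 4 - ‖v‖ ^ 2 / δ ^ 2) := by
  have h : HasFDerivAt (fun u => (-gaussKernel δ u / δ ^ 2) • innerSL ℝ u) _ u :=
    ((hasFDerivAt_gaussKernel δ u).neg.mul_const (δ ^ 2)⁻¹).smul (innerSL ℝ (E := E)).hasFDerivAt
  rw [fderiv_gaussKernel, h.fderiv]
  simp only [add_apply, smul_apply, neg_apply, ContinuousLinearMap.smulRight_apply,
    Pi.neg_apply, innerSL_apply_apply, smul_eq_mul]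
  rw [innerSL_apply_apply, real_inner_self_eq_norm_sq]
  ring

end GaussKernel

section GaussianMixture

variable {E : Type*} [NormedAddCommGroup E] [InnerProductSpace ℝ E] [FiniteDimensional ℝ E]
  [MeasurableSpace E] [BorelSpace E] {μ : Measure E} [IsFiniteMeasure μ] {R : ℝ}
  (hμR : ∀ᵐ x ∂μ, x ∈ closedBall (0 : E) R) (δ : ℝ)
include hμR

theorem measureConv_gaussKernel_pos [NeZero μ] (z : E) : 0 < measureConv μ (gaussKernel δ) z :=
  integral_exp_pos (integrable_comp_sub_of_ae_mem_isCompact (isCompact_closedBall 0 R) hμR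
    (contDiff_gaussKernel δ (n := 0)).continuous z)

theorem fderiv_measureConv_gaussKernel_apply (z v : E) :
    fderiv ℝ (measureConv μ (gaussKernel δ)) z v =
      -(∫ x, gaussKernel δ (z - x) * ⟪z - x, v⟫ ∂μ) / δ ^ 2 := by
  have hφ : ContDiff ℝ 1 (gaussKernel (E := E) δ) := contDiff_gaussKernel δ
  have hK := isCompact_closedBall (0 : E) R
  rw [fderiv_measureConv hK hμR hφ,
    measureConv_clm_apply hK hμR (hφ.continuous_fderiv one_ne_zero), ← integral_neg,
    ← integral_div]
  simp only [measureConv, fderiv_gaussKernel_apply]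
  congr 1 with x
  ring

theorem fderiv_fderiv_measureConv_gaussKernel_apply (z v : E) :
    fderiv ℝ (fderiv ℝ (measureConv μ (gaussKernel δ))) z v v =
      (∫ x, gaussKernel δ (z - x) * ⟪z - x, v⟫ ^ 2 ∂μ) / δ ^ 4 -
        ‖v‖ ^ 2 / δ ^ 2 * measureConv μ (gaussKernel δ) z := by
  have hφ : ContDiff ℝ 1 (gaussKernel (E := E) δ) := contDiff_gaussKernel δ
  have hφ' : ContDiff ℝ 1 (fderiv ℝ (gaussKernel (E := E) δ)) :=
    (contDiff_gaussKernel δ (n := 2)).fderiv_right le_rfl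
  have hK := isCompact_closedBall (0 : E) R
  have hw := integrable_comp_sub_of_ae_mem_isCompact hK hμR hφ.continuous z
  have hwY2 : Integrable (fun x => gaussKernel δ (z - x) * ⟪z - x, v⟫ ^ 2) μ :=
    integrable_comp_sub_of_ae_mem_isCompact hK hμR
      (f := fun u => gaussKernel δ u * ⟪u, v⟫ ^ 2) (hφ.continuous.mul (by fun_prop)) z
  rw [fderiv_measureConv hK hμR hφ, fderiv_measureConv hK hμR hφ',
    measureConv_clm_apply hK hμR (hφ'.continuous_fderiv one_ne_zero),
    measureConv_clm_apply hK hμR ((hφ'.continuous_fderiv one_ne_zero).clm_apply continuous_const)]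
  unfold measureConv
  rw [← integral_div, ← integral_const_mul, ← integral_sub (hwY2.div_const _) (hw.const_mul _)]
  simp only [fderiv_fderiv_gaussKernel_apply]
  congr 1 with x
  ring

theorem hessian_neg_log_measureConv_gaussKernel_ge [NeZero μ] (z v : E) :
    (1 / δ ^ 2 - R ^ 2 / δ ^ 4) * ‖v‖ ^ 2 ≤
      -fderiv ℝ (fderiv ℝ (measureConv μ (gaussKernel δ))) z v v / measureConv μ (gaussKernel δ) z
        + fderiv ℝ (measureConv μ (gaussKernel δ)) z v ^ 2 /
          measureConv μ (gaussKernel δ) z ^ 2 := by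
  have hvar := weighted_variance_le (μ := μ) (w := fun x => gaussKernel δ (z - x))
    (X := fun x => ⟪x, v⟫) (M := R * ‖v‖)
    (integrable_comp_sub_of_ae_mem_isCompact (isCompact_closedBall 0 R) hμR
      (contDiff_gaussKernel δ (n := 0)).continuous z)
    (ae_of_all _ fun x => (exp_pos _).le)
    (by fun_prop : Continuous fun x : E => ⟪x, v⟫).aestronglyMeasurable
    (hμR.mono fun x hx => (abs_real_inner_le_norm x v).trans
      (mul_le_mul_of_nonneg_right (mem_closedBall_zero_iff.mp hx) (norm_nonneg v))) ⟪z, v⟫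
  simp only [← inner_sub_left] at hvar
  have hpos := measureConv_gaussKernel_pos hμR δ z
  rw [fderiv_fderiv_measureConv_gaussKernel_apply hμR, fderiv_measureConv_gaussKernel_apply hμR]
  unfold measureConv at hpos ⊢
  set A := ∫ x, gaussKernel δ (z - x) * ⟪z - x, v⟫ ^ 2 ∂μ
  set B := ∫ x, gaussKernel δ (z - x) * ⟪z - x, v⟫ ∂μ
  set S := ∫ x, gaussKernel δ (z - x) ∂μ
  have hratio : (A * S - B ^ 2) / S ^ 2 ≤ (R * ‖v‖) ^ 2 := by
    rw [div_le_iff₀ (by positivity)]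
    exact hvar
  have hrhs : -(A / δ ^ 4 - ‖v‖ ^ 2 / δ ^ 2 * S) / S + (-B / δ ^ 2) ^ 2 / S ^ 2 =
      ‖v‖ ^ 2 / δ ^ 2 - (A * S - B ^ 2) / S ^ 2 / δ ^ 4 := by
    field_simp
    ring
  rw [hrhs]
  have := div_le_div_of_nonneg_right hratio (by positivity : (0 : ℝ) ≤ δ ^ 4)
  calc (1 / δ ^ 2 - R ^ 2 / δ ^ 4) * ‖v‖ ^ 2 = ‖v‖ ^ 2 / δ ^ 2 - (R * ‖v‖) ^ 2 / δ ^ 4 := by ring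
    _ ≤ _ := by linarith

end GaussianMixture

theorem hessian_neg_log_density_general (d : ℕ) (R δ : ℝ) (hδ : 0 < δ)
    (μ : Measure (EuclideanSpace ℝ (Fin d))) [IsProbabilityMeasure μ]
    (hsupp : μ (closedBall (0 : EuclideanSpace ℝ (Fin d)) R)ᶜ = 0)
    (p : EuclideanSpace ℝ (Fin d) → ℝ)
    (hp : ∀ z, p z = ∫ x, (2 * π * δ ^ 2) ^ (-(d : ℝ) / 2) *
      Real.exp (-‖z - x‖ ^ 2 / (2 * δ ^ 2)) ∂μ) :
    ContDiff ℝ 2 (fun z => -Real.log (p z)) ∧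
    ∀ z v : EuclideanSpace ℝ (Fin d),
      (1 / δ ^ 2 - R ^ 2 / δ ^ 4) * ‖v‖ ^ 2 ≤
        fderiv ℝ (fderiv ℝ (fun z => -Real.log (p z))) z v v := by
  set c : ℝ := (2 * π * δ ^ 2) ^ (-(d : ℝ) / 2)
  have hc : 0 < c := by positivity
  have hμR : ∀ᵐ x ∂μ, x ∈ closedBall 0 R := mem_ae_iff.mpr hsupp
  set G := measureConv μ (gaussKernel δ)
  have hG : ContDiff ℝ 2 G :=
    contDiff_measureConv (isCompact_closedBall 0 R) hμR (contDiff_gaussKernel δ)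
  have hGpos : ∀ z, 0 < G z := measureConv_gaussKernel_pos hμR δ
  have hpG : ∀ z, p z = c * G z := fun z => (hp z).trans (integral_const_mul _ _)
  have hlogp : (fun z => -log (p z)) = fun z => -log c + -log (G z) := by
    funext z
    rw [hpG z, log_mul hc.ne' (hGpos z).ne', neg_add]
  have hfderiv : fderiv ℝ (fun z => -log c + -log (G z)) = fderiv ℝ (fun z => -log (G z)) :=
    funext fun z => fderiv_const_add _
  refine ⟨hlogp ▸ contDiff_const.add (hG.log fun z => (hGpos z).ne').neg, fun z v => ?_⟩
  rw [hlogp, hfderiv, fderiv_fderiv_neg_log_apply hG hGpos]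
  exact hessian_neg_log_measureConv_gaussKernel_ge hμR δ z v

/-- If `μ` is supported in `B(0,R)` and `p` is the density of `μ ⋆ γ_δ`, then
`-log p` is `C²` and `Hess(-log p) ≥ (1/δ² - R²/δ⁴) I_d`. -/
theorem hessian_neg_log_density (d : ℕ) (hd : 1 ≤ d) (R δ : ℝ) (hR : 0 < R) (hδ : 0 < δ)
    (μ : Measure (EuclideanSpace ℝ (Fin d))) [IsProbabilityMeasure μ]
    (hsupp : μ (closedBall (0 : EuclideanSpace ℝ (Fin d)) R)ᶜ = 0)
    (p : EuclideanSpace ℝ (Fin d) → ℝ)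
    (hp : ∀ z, p z = ∫ x, (2 * π * δ ^ 2) ^ (-(d : ℝ) / 2) *
      Real.exp (-‖z - x‖ ^ 2 / (2 * δ ^ 2)) ∂μ) :
    ContDiff ℝ 2 (fun z => -Real.log (p z)) ∧
    ∀ z v : EuclideanSpace ℝ (Fin d),
      (1 / δ ^ 2 - R ^ 2 / δ ^ 4) * ‖v‖ ^ 2 ≤
        fderiv ℝ (fderiv ℝ (fun z => -Real.log (p z))) z v v :=
  hessian_neg_log_density_general d R δ hδ μ hsupp p hp
end

section
/- Let w : ℝ → ℝ be a C², even function with w″(r) ≥ ρ for all r ∈ ℝ (ρ ∈ ℝ). Then the function W : ℝ^d → ℝ defined by W(z) = w(|z|) is C², and Hess W(z) v · v ≥ ρ |v|² for all z, v ∈ ℝ^d. -/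
/-
Write `W z = w ‖z‖` and `c r = w' r / r`, extended by `c 0 = w'' 0`; since `w` is even,
`w' 0 = 0`, so `c` is continuous. Then `DW z = c ‖z‖ ⟪z, ·⟫` and
`D²W z = w'' ‖z‖ P_z + c ‖z‖ (⟪·, ·⟫ - P_z)`, where `P_z u v = ⟪z, u⟫ ⟪z, v⟫ / ‖z‖²` is the
projection onto `ℝ z` (and `P_0 = 0`). Near the origin the coefficient `w'' - c` of `P_z` tends to
`0`, which makes `D²W` continuous although `P_z` is not. Finally `w'' ≥ ρ` everywhere and, by the
mean value theorem applied to `w'` on `[0, r]`, also `c ≥ ρ`, while `0 ≤ P_z v v ≤ ‖v‖²`.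
-/

open Filter Topology Function ContinuousLinearMap
open scoped InnerProductSpace

theorem Function.Even.deriv_zero {f : ℝ → ℝ} (hf : Function.Even f) : deriv f 0 = 0 := by
  have h := deriv_comp_neg (f := f) (x := 0)
  rw [funext hf, neg_zero] at h
  linarith

/-- For `g = w'` this is the factor `c` in `D(w ∘ ‖·‖) z = c ‖z‖ ⟪z, ·⟫`. -/
noncomputable def radialSlope (g : ℝ → ℝ) : ℝ → ℝ :=
  update (fun r => g r / r) 0 (deriv g 0)

section radialSlope

variable {g : ℝ → ℝ}

lemma radialSlope_of_ne_zero {r : ℝ} (hr : r ≠ 0) : radialSlope g r = g r / r :=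
  update_of_ne hr ..

lemma radialSlope_zero : radialSlope g 0 = deriv g 0 := update_self ..

lemma continuous_radialSlope (hg : Differentiable ℝ g) (h0 : g 0 = 0) :
    Continuous (radialSlope g) := by
  refine continuous_iff_continuousAt.2 fun r => ?_
  rcases eq_or_ne r 0 with rfl | hr
  · refine continuousAt_update_same.2 ((hasDerivAt_iff_tendsto_slope.1 (hg 0).hasDerivAt).congr' ?_)
    filter_upwards [self_mem_nhdsWithin] with s hs
    rw [slope_def_field, h0, sub_zero, sub_zero]
  · exact (continuousAt_update_of_ne hr).2 ((hg r).continuousAt.div continuousAt_id hr)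

lemma exists_deriv_eq_div_of_eq_zero (hg : Differentiable ℝ g) (h0 : g 0 = 0) {r : ℝ}
    (hr : r ≠ 0) : ∃ ξ, deriv g ξ = g r / r := by
  have hd : ∀ s : Set ℝ, DifferentiableOn ℝ g s := fun _ => hg.differentiableOn
  rcases hr.lt_or_gt with hr | hr
  · obtain ⟨ξ, -, hξ⟩ := exists_deriv_eq_slope g hr hg.continuous.continuousOn (hd _)
    exact ⟨ξ, by rw [hξ, h0, zero_sub, zero_sub, neg_div_neg_eq]⟩
  · obtain ⟨ξ, -, hξ⟩ := exists_deriv_eq_slope g hr hg.continuous.continuousOn (hd _)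
    exact ⟨ξ, by rw [hξ, h0, sub_zero, sub_zero]⟩

lemma le_radialSlope {ρ : ℝ} (hg : Differentiable ℝ g) (h0 : g 0 = 0)
    (hρ : ∀ r, ρ ≤ deriv g r) (r : ℝ) : ρ ≤ radialSlope g r := by
  rcases eq_or_ne r 0 with rfl | hr
  · rw [radialSlope_zero]
    exact hρ 0
  · obtain ⟨ξ, hξ⟩ := exists_deriv_eq_div_of_eq_zero hg h0 hr
    rw [radialSlope_of_ne_zero hr, ← hξ]
    exact hρ ξ

end radialSlope

section radial

variable {E : Type*} [NormedAddCommGroup E] [InnerProductSpace ℝ E]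

theorem hasFDerivAt_norm_of_ne_zero {z : E} (hz : z ≠ 0) :
    HasFDerivAt (‖·‖) (‖z‖⁻¹ • innerSL ℝ z) z := by
  have hsqrt : HasDerivAt Real.sqrt (1 / (2 * √(‖z‖ ^ 2))) (‖z‖ ^ 2) :=
    Real.hasDerivAt_sqrt (by positivity)
  have h := hsqrt.comp_hasFDerivAt z (hasStrictFDerivAt_norm_sq z).hasFDerivAt
  have hnorm : (Real.sqrt ∘ fun x : E => ‖x‖ ^ 2) = (‖·‖) :=
    funext fun x => Real.sqrt_sq (norm_nonneg x)
  rw [hnorm, Real.sqrt_sq (norm_nonneg z)] at h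
  refine h.congr_fderiv (ContinuousLinearMap.ext fun v => ?_)
  simp only [smul_apply, innerSL_apply_apply, smul_eq_mul, nsmul_eq_mul, Nat.cast_ofNat]
  field_simp [norm_ne_zero_iff.2 hz]

/-- `innerSL ℝ` is typed as conjugate-linear in its first argument; over `ℝ` it is bilinear. -/
noncomputable def realInnerSL : E →L[ℝ] E →L[ℝ] ℝ := innerSL ℝ

@[simp]
lemma realInnerSL_apply (u v : E) : realInnerSL u v = ⟪u, v⟫_ℝ := rfl

noncomputable def radialDeriv (g : ℝ → ℝ) (z : E) : E →L[ℝ] ℝ :=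
  radialSlope g ‖z‖ • realInnerSL z

theorem hasFDerivAt_comp_norm {w : ℝ → ℝ} (hw : Differentiable ℝ w) (h0 : deriv w 0 = 0) (z : E) :
    HasFDerivAt (fun x : E => w ‖x‖) (radialDeriv (deriv w) z) z := by
  rcases eq_or_ne z 0 with rfl | hz
  · have hw0 : (fun t => w t - w 0) =o[𝓝 0] fun t => t := by
      simpa [h0] using hasDerivAt_iff_isLittleO_nhds_zero.1 (hw 0).hasDerivAt
    rw [hasFDerivAt_iff_isLittleO_nhds_zero]
    simpa [Function.comp_def, radialDeriv] using
      Asymptotics.isLittleO_norm_right.1 (hw0.comp_tendsto (tendsto_norm_zero (E := E)))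
  · have h := (hw ‖z‖).hasDerivAt.comp_hasFDerivAt z (hasFDerivAt_norm_of_ne_zero hz)
    rwa [smul_smul, ← div_eq_mul_inv, ← radialSlope_of_ne_zero (norm_ne_zero_iff.2 hz)] at h

/-- The projection onto `ℝ z` as a bilinear form; it is `0` at `z = 0`, since `0⁻¹ = 0`. -/
noncomputable def radialProjForm (z : E) : E →L[ℝ] E →L[ℝ] ℝ :=
  (‖z‖ ^ 2)⁻¹ • (innerSL ℝ z).smulRight (innerSL ℝ z)

lemma radialProjForm_apply (z u v : E) :
    radialProjForm z u v = ⟪z, u⟫_ℝ * ⟪z, v⟫_ℝ / ‖z‖ ^ 2 := by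
  simp [radialProjForm, div_eq_inv_mul]

lemma norm_radialProjForm_le (z : E) : ‖radialProjForm z‖ ≤ 1 :=
  calc ‖radialProjForm z‖ ≤ ‖(‖z‖ ^ 2)⁻¹‖ * ‖(innerSL ℝ z).smulRight (innerSL ℝ z)‖ := by
        exact opNorm_smul_le _ _
    _ = (‖z‖ ^ 2)⁻¹ * ‖z‖ ^ 2 := by
        rw [norm_smulRight_apply, innerSL_apply_norm, norm_inv, norm_pow, norm_norm, sq]
    _ ≤ 1 := inv_mul_le_one_of_le₀ le_rfl (by positivity)

lemma radialProjForm_apply_self_nonneg (z v : E) : 0 ≤ radialProjForm z v v := by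
  rw [radialProjForm_apply]
  exact div_nonneg (mul_self_nonneg _) (by positivity)

lemma radialProjForm_apply_self_le (z v : E) : radialProjForm z v v ≤ ‖v‖ ^ 2 :=
  calc radialProjForm z v v ≤ ‖radialProjForm z‖ * ‖v‖ * ‖v‖ := le_of_abs_le <| by
        simpa using (radialProjForm z).le_opNorm₂ v v
    _ ≤ ‖v‖ ^ 2 := by nlinarith [norm_radialProjForm_le z, norm_nonneg v]

lemma continuousAt_radialProjForm {z : E} (hz : z ≠ 0) : ContinuousAt radialProjForm z := by
  have h : Continuous fun x : E => smulRightL ℝ E (E →L[ℝ] ℝ) (innerSL ℝ x) (innerSL ℝ x) := by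
    fun_prop
  have hinv : ContinuousAt (fun x : E => (‖x‖ ^ 2)⁻¹) z :=
    (continuous_norm.pow 2).continuousAt.inv₀ (pow_ne_zero 2 (norm_ne_zero_iff.2 hz))
  exact hinv.smul h.continuousAt

noncomputable def radialHessian (g : ℝ → ℝ) (z : E) : E →L[ℝ] E →L[ℝ] ℝ :=
  (deriv g ‖z‖ - radialSlope g ‖z‖) • radialProjForm z + radialSlope g ‖z‖ • realInnerSL

variable {g : ℝ → ℝ}

lemma radialHessian_zero : radialHessian g (0 : E) = radialSlope g 0 • realInnerSL := by
  ext u v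
  simp [radialHessian, radialProjForm_apply]

lemma hasFDerivAt_radialDeriv_zero (hg : Differentiable ℝ g) (h0 : g 0 = 0) :
    HasFDerivAt (radialDeriv g) (radialHessian g (0 : E)) 0 := by
  have hslope : (fun x : E => radialSlope g ‖x‖ - radialSlope g 0) =o[𝓝 0] fun _ => (1 : ℝ) := by
    refine (Asymptotics.isLittleO_one_iff ℝ).2 (tendsto_sub_nhds_zero_iff.2 ?_)
    simpa [Function.comp_def] using
      ((continuous_radialSlope hg h0).comp continuous_norm).tendsto (0 : E)
  rw [hasFDerivAt_iff_isLittleO_nhds_zero]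
  have := hslope.smul_isBigO (realInnerSL.isBigO_id (𝓝 0))
  refine (this.congr_left fun x => ?_).congr_right fun x => ?_
  · rw [radialDeriv, radialDeriv, radialHessian_zero, zero_add, norm_zero, map_zero, smul_zero,
      sub_zero, smul_apply, sub_smul]
  · simp

lemma hasFDerivAt_radialDeriv (hg : Differentiable ℝ g) (h0 : g 0 = 0) (z : E) :
    HasFDerivAt (radialDeriv g) (radialHessian g z) z := by
  rcases eq_or_ne z 0 with rfl | hz
  · exact hasFDerivAt_radialDeriv_zero hg h0
  have hr : ‖z‖ ≠ 0 := norm_ne_zero_iff.2 hz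
  have hslope : HasFDerivAt (fun x : E => g ‖x‖ / ‖x‖)
      (((deriv g ‖z‖ * ‖z‖ - g ‖z‖ * 1) / ‖z‖ ^ 2) • (‖z‖⁻¹ • innerSL ℝ z)) z :=
    ((hg ‖z‖).hasDerivAt.div (hasDerivAt_id ‖z‖) hr).comp_hasFDerivAt z
      (hasFDerivAt_norm_of_ne_zero hz)
  have heq : radialDeriv g =ᶠ[𝓝 z]
      fun x => (g ‖x‖ / ‖x‖) • realInnerSL x := by
    filter_upwards [isOpen_ne.mem_nhds hz] with x hx
    rw [radialDeriv, radialSlope_of_ne_zero (norm_ne_zero_iff.2 hx)]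
  refine ((hslope.smul realInnerSL.hasFDerivAt).congr_of_eventuallyEq heq).congr_fderiv ?_
  ext u v
  simp [radialHessian, radialProjForm_apply, radialSlope_of_ne_zero hr]
  field_simp
  ring

lemma continuous_radialHessian (hg : ContDiff ℝ 1 g) (h0 : g 0 = 0) :
    Continuous (radialHessian g : E → E →L[ℝ] E →L[ℝ] ℝ) := by
  have hc : Continuous (radialSlope g) :=
    continuous_radialSlope (hg.differentiable one_ne_zero) h0
  have hcoef : Continuous fun x : E => deriv g ‖x‖ - radialSlope g ‖x‖ :=
    ((hg.continuous_deriv le_rfl).sub hc).comp continuous_norm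
  have hiso : Continuous fun x : E => radialSlope g ‖x‖ • realInnerSL (E := E) :=
    (hc.comp continuous_norm).smul continuous_const
  -- instance search fails to find this for `ℝ`-valued bilinear maps
  have : ContinuousAdd (E →L[ℝ] E →L[ℝ] ℝ) :=
    @IsTopologicalAddGroup.toContinuousAdd _ _ ContinuousLinearMap.addCommGroup.toAddGroup _
  refine .add ?_ hiso
  refine continuous_iff_continuousAt.2 fun z => ?_
  rcases eq_or_ne z 0 with rfl | hz
  · -- the coefficient vanishes at the origin, and `radialProjForm` is bounded
    have hlim : Tendsto (fun x : E => ‖deriv g ‖x‖ - radialSlope g ‖x‖‖) (𝓝 0) (𝓝 0) := by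
      simpa [radialSlope_zero] using (hcoef.tendsto (0 : E)).norm
    have hval : (deriv g ‖(0 : E)‖ - radialSlope g ‖(0 : E)‖) • radialProjForm (0 : E) = 0 := by
      ext u v
      simp [radialProjForm_apply]
    rw [ContinuousAt, hval]
    refine squeeze_zero_norm (E := E →L[ℝ] E →L[ℝ] ℝ) (fun x : E => ?_) hlim
    calc _ ≤ ‖deriv g ‖x‖ - radialSlope g ‖x‖‖ * ‖radialProjForm x‖ := opNorm_smul_le _ _
      _ ≤ ‖deriv g ‖x‖ - radialSlope g ‖x‖‖ :=
        mul_le_of_le_one_right (norm_nonneg _) (norm_radialProjForm_le x)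
  · exact hcoef.continuousAt.smul (continuousAt_radialProjForm hz)

lemma mul_norm_sq_le_radialHessian {ρ : ℝ} (hg : Differentiable ℝ g) (h0 : g 0 = 0)
    (hρ : ∀ r, ρ ≤ deriv g r) (z v : E) : ρ * ‖v‖ ^ 2 ≤ radialHessian g z v v := by
  have hP₀ := radialProjForm_apply_self_nonneg z v
  have hP₁ := radialProjForm_apply_self_le z v
  have hc := le_radialSlope hg h0 hρ ‖z‖
  have hg' := hρ ‖z‖
  simp only [radialHessian, add_apply, smul_apply, smul_eq_mul, realInnerSL_apply,
    real_inner_self_eq_norm_sq]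
  nlinarith [mul_nonneg (sub_nonneg.2 hg') hP₀, mul_nonneg (sub_nonneg.2 hc) (sub_nonneg.2 hP₁)]

end radial

theorem contDiff_two_of_hasFDerivAt {E F : Type*} [NormedAddCommGroup E] [NormedSpace ℝ E]
    [NormedAddCommGroup F] [NormedSpace ℝ F] {f : E → F} {f' : E → E →L[ℝ] F}
    {f'' : E → E →L[ℝ] E →L[ℝ] F} (hf : ∀ x, HasFDerivAt f (f' x) x)
    (hf' : ∀ x, HasFDerivAt f' (f'' x) x) (hf'' : Continuous f'') : ContDiff ℝ 2 f :=
  contDiff_succ_iff_hasFDerivAt.2 ⟨f', contDiff_one_iff_hasFDerivAt.2 ⟨f'', hf'', hf'⟩, hf⟩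

/-- If `w : ℝ → ℝ` is `C²`, even, and `ρ`-convex (`w'' ≥ ρ`), then
`W(z) = w(|z|)` on `ℝ^d` is `C²` and `ρ`-convex. -/
theorem radial_convexity (d : ℕ) (w : ℝ → ℝ) (hw : ContDiff ℝ 2 w)
    (heven : ∀ r : ℝ, w (-r) = w r) (ρ : ℝ)
    (hconv : ∀ r : ℝ, ρ ≤ deriv (deriv w) r) :
    ContDiff ℝ 2 (fun z : EuclideanSpace ℝ (Fin d) => w ‖z‖) ∧
    ∀ z v : EuclideanSpace ℝ (Fin d),
      ρ * ‖v‖ ^ 2 ≤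
        fderiv ℝ (fderiv ℝ (fun z : EuclideanSpace ℝ (Fin d) => w ‖z‖)) z v v := by
  have hw' : ContDiff ℝ 1 (deriv w) := hw.deriv'
  have hw'_diff : Differentiable ℝ (deriv w) := hw'.differentiable one_ne_zero
  have h0 : deriv w 0 = 0 := Function.Even.deriv_zero heven
  have hD := hasFDerivAt_comp_norm (E := EuclideanSpace ℝ (Fin d))
    (hw.differentiable two_ne_zero) h0
  have hD2 := hasFDerivAt_radialDeriv (E := EuclideanSpace ℝ (Fin d)) hw'_diff h0
  refine ⟨contDiff_two_of_hasFDerivAt hD hD2 (continuous_radialHessian hw' h0), fun z v => ?_⟩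
  rw [funext fun z => (hD z).fderiv, (hD2 z).fderiv]
  exact mul_norm_sq_le_radialHessian hw'_diff h0 hconv z v
end
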